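/- In a Thompson NFA, if a state s' is reachable from a state s by a path of ε-transitions, then s' is reachable from s by a path consisting of forward ε-transitions with at most one back transition; consequently, Close(S) equals the set of states reachable from S by ε-paths that use at most one back transition. -/
import Mathlib


inductive Regex (α : Type) where
  | char : α → Regex α
  | cat  : Regex α → Regex α → Regex α
  | alt  : Regex α → Regex α → Regex α
  | star : Regex α → Regex α

namespace Regex
variable {α : Type}
/-- number of characters and operators in `R` (nodes of the parse tree). -/
def size : Regex α → ℕ
  | char _ => 1
  | cat S T => S.size + T.size + 1
  | alt S T => S.size + T.size + 1
  | star S => S.size + 1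

/-- the language generated by `R`. -/
def lang : Regex α → Set (List α)
  | char a => {[a]}
  | cat S T => {w | ∃ u v, u ∈ S.lang ∧ v ∈ T.lang ∧ w = u ++ v}
  | alt S T => S.lang ∪ T.lang
  | star S => {w | ∃ l : List (List α), (∀ u ∈ l, u ∈ S.lang) ∧ w = l.flatten}
end Regex

/-- An NFA with ε-transitions (`none` labels), a single start and accepting state,
and a distinguished set of back transitions. -/
structure TNFA (α : Type) where
  states : Finset ℕ
  start : ℕ
  accept : ℕ
  trans : Finset (ℕ × Option α × ℕ)
  back : Finset (ℕ × ℕ)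

variable {α : Type} [DecidableEq α]

/-- Thompson's construction, allocating the states `[b, b + 2·size R)`;
the start state is `b` and the accepting state is `b+1`. -/
def thompson : Regex α → ℕ → TNFA α
  | .char a, b => ⟨{b, b+1}, b, b+1, {(b, some a, b+1)}, ∅⟩
  | .cat S T, b =>
    let A := thompson S (b+2)
    let B := thompson T (b+2+2*S.size)
    ⟨insert b (insert (b+1) (A.states ∪ B.states)), b, b+1,
      ({(b, none, A.start), (A.accept, none, B.start), (B.accept, none, b+1)} :
        Finset (ℕ × Option α × ℕ)) ∪ A.trans ∪ B.trans,
      A.back ∪ B.back⟩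
  | .alt S T, b =>
    let A := thompson S (b+2)
    let B := thompson T (b+2+2*S.size)
    ⟨insert b (insert (b+1) (A.states ∪ B.states)), b, b+1,
      ({(b, none, A.start), (b, none, B.start), (A.accept, none, b+1), (B.accept, none, b+1)} :
        Finset (ℕ × Option α × ℕ)) ∪ A.trans ∪ B.trans,
      A.back ∪ B.back⟩
  | .star S, b =>
    let A := thompson S (b+2)
    ⟨insert b (insert (b+1) A.states), b, b+1,
      ({(b, none, A.start), (b, none, b+1), (A.accept, none, b+1), (A.accept, none, A.start)} :
        Finset (ℕ × Option α × ℕ)) ∪ A.trans,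
      insert (A.accept, A.start) A.back⟩

/-- `Path N s w t`: there is a path from `s` to `t` whose non-ε labels spell `w`. -/
inductive TNFA.Path (N : TNFA α) : ℕ → List α → ℕ → Prop where
  | refl (s : ℕ) : TNFA.Path N s [] s
  | eps {s t u : ℕ} {w : List α} :
      (s, none, t) ∈ N.trans → TNFA.Path N t w u → TNFA.Path N s w u
  | sym {s t u : ℕ} {w : List α} {a : α} :
      (s, some a, t) ∈ N.trans → TNFA.Path N t w u → TNFA.Path N s (a :: w) u

/-- states reachable from `S` via a single `a`-transition. -/
def TNFA.Move (N : TNFA α) (S : Set ℕ) (a : α) : Set ℕ :=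
  {t | ∃ s ∈ S, (s, some a, t) ∈ N.trans}

def TNFA.epsStep (N : TNFA α) (s t : ℕ) : Prop := (s, none, t) ∈ N.trans

/-- the ε-closure of `S`. -/
def TNFA.Close (N : TNFA α) (S : Set ℕ) : Set ℕ :=
  {t | ∃ s ∈ S, Relation.ReflTransGen N.epsStep s t}

/-- `EPathB N s t k`: there is an ε-path from `s` to `t` using exactly `k` back
transitions (all other transitions on the path being forward ε-transitions). -/
inductive EPathB (N : TNFA α) : ℕ → ℕ → ℕ → Prop where
  | refl (s : ℕ) : EPathB N s s 0
  | fwd {s t u k} : (s, none, t) ∈ N.trans → (s, t) ∉ N.back →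
      EPathB N t u k → EPathB N s u k
  | bk {s t u k} : (s, none, t) ∈ N.trans → (s, t) ∈ N.back →
      EPathB N t u k → EPathB N s u (k + 1)

set_option linter.unusedSectionVars false

lemma Regex.size_pos (R : Regex α) : 0 < R.size := by
  cases R <;> simp [Regex.size]

lemma thompson_start (R : Regex α) (b : ℕ) : (thompson R b).start = b := by
  cases R <;> rfl

lemma thompson_accept (R : Regex α) (b : ℕ) : (thompson R b).accept = b + 1 := by
  cases R <;> rfl

lemma thompson_mem_states {R : Regex α} {b s : ℕ} :
    s ∈ (thompson R b).states ↔ b ≤ s ∧ s < b + 2 * R.size := by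
  induction R generalizing b s with
  | char a => simp [thompson, Regex.size]; omega
  | cat S T ihS ihT =>
    have hS := S.size_pos; have hT := T.size_pos
    simp [thompson, Regex.size, ihS, ihT]; omega
  | alt S T ihS ihT =>
    have hS := S.size_pos; have hT := T.size_pos
    simp [thompson, Regex.size, ihS, ihT]; omega
  | star S ihS =>
    have hS := S.size_pos
    simp [thompson, Regex.size, ihS]; omega

lemma thompson_trans_range {R : Regex α} {b s t : ℕ} {c : Option α}
    (h : (s, c, t) ∈ (thompson R b).trans) :
    (b ≤ s ∧ s < b + 2 * R.size) ∧ (b ≤ t ∧ t < b + 2 * R.size) := by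
  induction R generalizing b with
  | char a => simp [thompson, Regex.size] at h ⊢; omega
  | cat S T ihS ihT =>
    have hS := S.size_pos; have hT := T.size_pos
    simp only [thompson, thompson_start, thompson_accept, Finset.mem_union,
      Finset.mem_insert, Finset.mem_singleton, Prod.mk.injEq] at h
    simp only [Regex.size]
    rcases h with ((⟨h1,h2,h3⟩|⟨h1,h2,h3⟩|⟨h1,h2,h3⟩)|h)|h
    · omega
    · omega
    · omega
    · have := ihS h; omega
    · have := ihT h; omega
  | alt S T ihS ihT =>
    have hS := S.size_pos; have hT := T.size_pos
    simp only [thompson, thompson_start, thompson_accept, Finset.mem_union,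
      Finset.mem_insert, Finset.mem_singleton, Prod.mk.injEq] at h
    simp only [Regex.size]
    rcases h with ((⟨h1,h2,h3⟩|⟨h1,h2,h3⟩|⟨h1,h2,h3⟩|⟨h1,h2,h3⟩)|h)|h
    · omega
    · omega
    · omega
    · omega
    · have := ihS h; omega
    · have := ihT h; omega
  | star S ihS =>
    have hS := S.size_pos
    simp only [thompson, thompson_start, thompson_accept, Finset.mem_union,
      Finset.mem_insert, Finset.mem_singleton, Prod.mk.injEq] at h
    simp only [Regex.size]
    rcases h with (⟨h1,h2,h3⟩|⟨h1,h2,h3⟩|⟨h1,h2,h3⟩|⟨h1,h2,h3⟩)|h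
    · omega
    · omega
    · omega
    · omega
    · have := ihS h; omega

lemma thompson_back_range {R : Regex α} {b s t : ℕ}
    (h : (s, t) ∈ (thompson R b).back) :
    (b ≤ s ∧ s < b + 2 * R.size) ∧ (b ≤ t ∧ t < b + 2 * R.size) := by
  induction R generalizing b with
  | char a => simp [thompson] at h
  | cat S T ihS ihT =>
    have hS := S.size_pos; have hT := T.size_pos
    simp only [thompson, Finset.mem_union] at h
    simp only [Regex.size]
    rcases h with h | h
    · have := ihS h; omega
    · have := ihT h; omega
  | alt S T ihS ihT =>
    have hS := S.size_pos; have hT := T.size_pos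
    simp only [thompson, Finset.mem_union] at h
    simp only [Regex.size]
    rcases h with h | h
    · have := ihS h; omega
    · have := ihT h; omega
  | star S ihS =>
    have hS := S.size_pos
    simp only [thompson, thompson_start, thompson_accept, Finset.mem_insert,
      Prod.mk.injEq] at h
    simp only [Regex.size]
    rcases h with ⟨h1, h2⟩ | h
    · omega
    · have := ihS h; omega

lemma thompson_accept_no_src {R : Regex α} {b t : ℕ} {c : Option α}
    (h : (b + 1, c, t) ∈ (thompson R b).trans) : False := by
  induction R generalizing b with
  | char a => simp [thompson] at h
  | cat S T ihS ihT =>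
    have hS := S.size_pos; have hT := T.size_pos
    simp only [thompson, thompson_start, thompson_accept, Finset.mem_union,
      Finset.mem_insert, Finset.mem_singleton, Prod.mk.injEq] at h
    rcases h with ((⟨h1,h2,h3⟩|⟨h1,h2,h3⟩|⟨h1,h2,h3⟩)|h)|h
    · omega
    · omega
    · omega
    · have := (thompson_trans_range h).1; omega
    · have := (thompson_trans_range h).1; omega
  | alt S T ihS ihT =>
    have hS := S.size_pos; have hT := T.size_pos
    simp only [thompson, thompson_start, thompson_accept, Finset.mem_union,
      Finset.mem_insert, Finset.mem_singleton, Prod.mk.injEq] at h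
    rcases h with ((⟨h1,h2,h3⟩|⟨h1,h2,h3⟩|⟨h1,h2,h3⟩|⟨h1,h2,h3⟩)|h)|h
    · omega
    · omega
    · omega
    · omega
    · have := (thompson_trans_range h).1; omega
    · have := (thompson_trans_range h).1; omega
  | star S ihS =>
    simp only [thompson, thompson_start, thompson_accept, Finset.mem_union,
      Finset.mem_insert, Finset.mem_singleton, Prod.mk.injEq] at h
    rcases h with (⟨h1,h2,h3⟩|⟨h1,h2,h3⟩|⟨h1,h2,h3⟩|⟨h1,h2,h3⟩)|h
    · omega
    · omega
    · omega
    · omega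
    · have := (thompson_trans_range h).1; omega
lemma EPathB.append {N : TNFA α} {s t u : ℕ} {j k : ℕ}
    (h1 : EPathB N s t j) (h2 : EPathB N t u k) : EPathB N s u (j + k) := by
  induction h1 with
  | refl => simpa using h2
  | fwd e nb _ ih => exact .fwd e nb (ih h2)
  | bk e hb _ ih =>
    have := EPathB.bk e hb (ih h2)
    rwa [Nat.add_right_comm] at this

lemma EPathB.toRTG {N : TNFA α} {s t k : ℕ} (h : EPathB N s t k) :
    Relation.ReflTransGen N.epsStep s t := by
  induction h with
  | refl => exact .refl
  | fwd e _ _ ih => exact Relation.ReflTransGen.head e ih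
  | bk e _ _ ih => exact Relation.ReflTransGen.head e ih

lemma EPathB.lift {A N : TNFA α} (hT : A.trans ⊆ N.trans) (hB : A.back ⊆ N.back)
    (hFB : ∀ s t, (s, (none : Option α), t) ∈ A.trans → (s, t) ∈ N.back → (s, t) ∈ A.back)
    {s t k : ℕ} (h : EPathB A s t k) : EPathB N s t k := by
  induction h with
  | refl => exact .refl _
  | fwd e nb _ ih => exact .fwd (hT e) (fun hb => nb (hFB _ _ e hb)) ih
  | bk e hb _ ih => exact .bk (hT e) (hB hb) ih
lemma thompson_rtg_accept_eq {R : Regex α} {b s' : ℕ}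
    (h : Relation.ReflTransGen (thompson R b).epsStep (b+1) s') : s' = b + 1 := by
  rcases Relation.ReflTransGen.cases_head h with h | ⟨c, e, _⟩
  · exact h.symm
  · exact (thompson_accept_no_src e).elim

lemma thompson_rtg_range {R : Regex α} {b x y : ℕ}
    (h : Relation.ReflTransGen (thompson R b).epsStep x y)
    (hx : b ≤ x ∧ x < b + 2 * R.size) : b ≤ y ∧ y < b + 2 * R.size := by
  induction h with
  | refl => exact hx
  | tail _ e _ => exact (thompson_trans_range e).2

lemma thompson_rtg_range' {R : Regex α} {b x y : ℕ}
    (h : Relation.ReflTransGen (thompson R b).epsStep x y) :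
    x = y ∨ (b ≤ y ∧ y < b + 2 * R.size) := by
  induction h with
  | refl => exact Or.inl rfl
  | tail _ e _ => exact Or.inr (thompson_trans_range e).2
set_option maxHeartbeats 1600000 in
theorem thompson_epath_main (R : Regex α) (b : ℕ) :
    (∀ s s', Relation.ReflTransGen (thompson R b).epsStep s s' →
        ∃ k ≤ 1, EPathB (thompson R b) s s' k) ∧
    (∀ s, Relation.ReflTransGen (thompson R b).epsStep s (b+1) →
        EPathB (thompson R b) s (b+1) 0) ∧
    (∀ s', Relation.ReflTransGen (thompson R b).epsStep b s' →
        EPathB (thompson R b) b s' 0) := by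
  induction R generalizing b with
  | char a =>
    have key : ∀ s s', Relation.ReflTransGen (thompson (Regex.char a) b).epsStep s s' →
        s = s' := by
      intro s s' h
      induction h with
      | refl => rfl
      | tail _ e ih =>
        exfalso
        have e' : _ ∈ (thompson (Regex.char a) b).trans := e
        simp [thompson] at e'
    refine ⟨fun s s' h => ?_, fun s h => ?_, fun s' h => ?_⟩
    · exact ⟨0, by omega, (key _ _ h) ▸ .refl _⟩
    · exact (key _ _ h) ▸ .refl _
    · exact (key _ _ h) ▸ .refl _
  | cat S T ihS ihT =>
    have hS := S.size_pos; have hT := T.size_pos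
    obtain ⟨h1A, h2A, h3A⟩ := ihS (b+2)
    obtain ⟨h1B, h2B, h3B⟩ := ihT (b+2+2*S.size)
    set N := thompson (Regex.cat S T) b with hN
    set A := thompson S (b+2) with hA
    set B := thompson T (b+2+2*S.size) with hB
    have memtrans : ∀ (x : ℕ) (c : Option α) (y : ℕ), (x, c, y) ∈ N.trans ↔
        ((x = b ∧ c = none ∧ y = b+2) ∨ (x = b+2+1 ∧ c = none ∧ y = b+2+2*S.size) ∨
         (x = b+2+2*S.size+1 ∧ c = none ∧ y = b+1) ∨
         (x,c,y) ∈ A.trans ∨ (x,c,y) ∈ B.trans) := by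
      intro x c y
      simp [hN, hA, hB, thompson, thompson_start, thompson_accept]
    have memback : ∀ x y : ℕ, (x, y) ∈ N.back ↔
        ((x,y) ∈ A.back ∨ (x,y) ∈ B.back) := by
      intro x y; simp [hN, hA, hB, thompson]
    -- lifts
    have liftA : ∀ {x y k}, EPathB A x y k → EPathB N x y k := by
      intro x y k h
      refine h.lift ?_ ?_ ?_
      · intro p hp; rw [hN]; simp only [thompson, Finset.mem_union]; tauto
      · intro p hp; rw [hN]; simp only [thompson, Finset.mem_union]; tauto
      · intro x' y' ht hb
        rcases (memback _ _).1 hb with h' | h'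
        · exact h'
        · exfalso
          have r1 := (thompson_trans_range ht).1
          have r2 := (thompson_back_range h').1
          omega
    have liftB : ∀ {x y k}, EPathB B x y k → EPathB N x y k := by
      intro x y k h
      refine h.lift ?_ ?_ ?_
      · intro p hp; rw [hN]; simp only [thompson, Finset.mem_union]; tauto
      · intro p hp; rw [hN]; simp only [thompson, Finset.mem_union]; tauto
      · intro x' y' ht hb
        rcases (memback _ _).1 hb with h' | h'
        · exfalso
          have r1 := (thompson_trans_range ht).1
          have r2 := (thompson_back_range h').1
          omega
        · exact h'
    -- connectors
    have e1 : (b, (none : Option α), b+2) ∈ N.trans := by rw [memtrans]; tauto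
    have nb1 : (b, b+2) ∉ N.back := by
      rw [memback]; rintro (h | h) <;> have := (thompson_back_range h).1 <;> omega
    have e2 : (b+2+1, (none : Option α), b+2+2*S.size) ∈ N.trans := by rw [memtrans]; tauto
    have nb2 : (b+2+1, b+2+2*S.size) ∉ N.back := by
      rw [memback]
      rintro (h | h)
      · have := (thompson_back_range h).2; omega
      · have := (thompson_back_range h).1; omega
    have e3 : (b+2+2*S.size+1, (none : Option α), b+1) ∈ N.trans := by rw [memtrans]; tauto
    have nb3 : (b+2+2*S.size+1, b+1) ∉ N.back := by
      rw [memback]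
      rintro (h | h)
      · have := (thompson_back_range h).1; omega
      · have := (thompson_back_range h).2; omega
    -- key lemmas
    have keyB : ∀ s s', Relation.ReflTransGen N.epsStep s s' → b+2+2*S.size ≤ s →
        Relation.ReflTransGen B.epsStep s s' ∨
          (Relation.ReflTransGen B.epsStep s (b+2+2*S.size+1) ∧ s' = b+1) := by
      intro s s' h
      induction h using Relation.ReflTransGen.head_induction_on with
      | refl => intro _; exact Or.inl .refl
      | head e h' ih =>
        rename_i x y
        intro hs
        have e' : (x, (none : Option α), y) ∈ N.trans := e
        rcases (memtrans _ _ _).1 e' with ⟨rfl,-,rfl⟩ | ⟨rfl,-,rfl⟩ | ⟨rfl,-,rfl⟩ | hm | hm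
        · omega
        · omega
        · exact Or.inr ⟨.refl, thompson_rtg_accept_eq h'⟩
        · exfalso; have := (thompson_trans_range hm).1; omega
        · have hy := (thompson_trans_range hm).2
          rcases ih (by omega) with h'' | ⟨h'', rfl⟩
          · exact Or.inl (Relation.ReflTransGen.head hm h'')
          · exact Or.inr ⟨Relation.ReflTransGen.head hm h'', rfl⟩
    have keyA : ∀ s s', Relation.ReflTransGen N.epsStep s s' →
        (b+2 ≤ s ∧ s < b+2+2*S.size) →
        Relation.ReflTransGen A.epsStep s s' ∨
          (Relation.ReflTransGen A.epsStep s (b+2+1) ∧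
            (Relation.ReflTransGen B.epsStep (b+2+2*S.size) s' ∨
              (Relation.ReflTransGen B.epsStep (b+2+2*S.size) (b+2+2*S.size+1) ∧ s' = b+1))) := by
      intro s s' h
      induction h using Relation.ReflTransGen.head_induction_on with
      | refl => intro _; exact Or.inl .refl
      | head e h' ih =>
        rename_i x y
        intro hs
        have e' : (x, (none : Option α), y) ∈ N.trans := e
        rcases (memtrans _ _ _).1 e' with ⟨rfl,-,rfl⟩ | ⟨rfl,-,rfl⟩ | ⟨rfl,-,rfl⟩ | hm | hm
        · omega
        · exact Or.inr ⟨.refl, keyB _ _ h' (by omega)⟩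
        · omega
        · have hy := (thompson_trans_range hm).2
          rcases ih (by omega) with h'' | ⟨h'', hrest⟩
          · exact Or.inl (Relation.ReflTransGen.head hm h'')
          · exact Or.inr ⟨Relation.ReflTransGen.head hm h'', hrest⟩
        · exfalso; have := (thompson_trans_range hm).1; omega
    -- from the key disjunctions to paths
    have pA : ∀ s s', (Relation.ReflTransGen A.epsStep s s' ∨
          (Relation.ReflTransGen A.epsStep s (b+2+1) ∧
            (Relation.ReflTransGen B.epsStep (b+2+2*S.size) s' ∨
              (Relation.ReflTransGen B.epsStep (b+2+2*S.size) (b+2+2*S.size+1) ∧ s' = b+1)))) →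
        ∃ k ≤ 1, EPathB N s s' k := by
      intro s s' h
      rcases h with h | ⟨hacc, hrest⟩
      · obtain ⟨k, hk, p⟩ := h1A s s' h
        exact ⟨k, hk, liftA p⟩
      · have f1 : EPathB N s (b+2+1) 0 := liftA (h2A s hacc)
        rcases hrest with h' | ⟨h', rfl⟩
        · have f2 : EPathB N (b+2+2*S.size) s' 0 := liftB (h3B s' h')
          exact ⟨0, by omega, by simpa using f1.append (.fwd e2 nb2 f2)⟩
        · have f2 : EPathB N (b+2+2*S.size) (b+2+2*S.size+1) 0 := liftB (h3B _ h')
          exact ⟨0, by omega,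
            by simpa using f1.append (.fwd e2 nb2 (f2.append (.fwd e3 nb3 (.refl _))))⟩
    have pB : ∀ s s', (Relation.ReflTransGen B.epsStep s s' ∨
          (Relation.ReflTransGen B.epsStep s (b+2+2*S.size+1) ∧ s' = b+1)) →
        ∃ k ≤ 1, EPathB N s s' k := by
      intro s s' h
      rcases h with h | ⟨h, rfl⟩
      · obtain ⟨k, hk, p⟩ := h1B s s' h
        exact ⟨k, hk, liftB p⟩
      · exact ⟨0, by omega, by simpa using (liftB (h2B s h)).append (.fwd e3 nb3 (.refl _))⟩
    -- H3
    have p3 : ∀ s', Relation.ReflTransGen N.epsStep b s' → EPathB N b s' 0 := by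
      intro s' h
      rcases Relation.ReflTransGen.cases_head h with rfl | ⟨c, e, h'⟩
      · exact .refl _
      · have e' : (b, (none : Option α), c) ∈ N.trans := e
        rcases (memtrans _ _ _).1 e' with ⟨-,-,rfl⟩ | ⟨h0,-,-⟩ | ⟨h0,-,-⟩ | hm | hm
        · rcases keyA _ _ h' (by omega) with h'' | ⟨hacc, hrest⟩
          · exact .fwd e1 nb1 (liftA (h3A s' h''))
          · have f1 : EPathB N (b+2) (b+2+1) 0 := liftA (h3A _ hacc)
            rcases hrest with h'' | ⟨h'', rfl⟩
            · have f2 : EPathB N (b+2+2*S.size) s' 0 := liftB (h3B s' h'')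
              have : EPathB N (b+2) s' (0+0) := f1.append (.fwd e2 nb2 f2)
              exact .fwd e1 nb1 (by simpa using this)
            · have f2 : EPathB N (b+2+2*S.size) (b+2+2*S.size+1) 0 := liftB (h3B _ h'')
              have : EPathB N (b+2) (b+1) (0+0) :=
                f1.append (.fwd e2 nb2 (f2.append (.fwd e3 nb3 (.refl _))))
              exact .fwd e1 nb1 (by simpa using this)
        · omega
        · omega
        · exfalso; have := (thompson_trans_range hm).1; omega
        · exfalso; have := (thompson_trans_range hm).1; omega
    -- H2
    have p2 : ∀ s, Relation.ReflTransGen N.epsStep s (b+1) → EPathB N s (b+1) 0 := by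
      intro s h
      rcases Relation.ReflTransGen.cases_head h with h0 | ⟨c, e, h'⟩
      · exact h0 ▸ .refl _
      · have e' : (s, (none : Option α), c) ∈ N.trans := e
        have hsA : (b+2 ≤ s ∧ s < b+2+2*S.size) → EPathB N s (b+1) 0 := by
          intro hs
          rcases keyA _ _ h hs with h'' | ⟨hacc, hrest⟩
          · exfalso; rcases thompson_rtg_range' h'' with h'' | h'' <;> omega
          · have f1 : EPathB N s (b+2+1) 0 := liftA (h2A s hacc)
            rcases hrest with h'' | ⟨h'', -⟩
            · exfalso; have := thompson_rtg_range h'' (by omega); omega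
            · have f2 : EPathB N (b+2+2*S.size) (b+2+2*S.size+1) 0 := liftB (h3B _ h'')
              exact by simpa using f1.append (.fwd e2 nb2 (f2.append (.fwd e3 nb3 (.refl _))))
        have hsB : b+2+2*S.size ≤ s → EPathB N s (b+1) 0 := by
          intro hs
          rcases keyB _ _ h hs with h'' | ⟨h'', -⟩
          · exfalso; rcases thompson_rtg_range' h'' with h'' | h'' <;> omega
          · exact by simpa using (liftB (h2B s h'')).append (.fwd e3 nb3 (.refl _))
        rcases (memtrans _ _ _).1 e' with ⟨rfl,-,-⟩ | ⟨rfl,-,-⟩ | ⟨rfl,-,-⟩ | hm | hm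
        · exact p3 _ h
        · exact hsA (by omega)
        · exact hsB (by omega)
        · exact hsA (by have := (thompson_trans_range hm).1; omega)
        · exact hsB (by have := (thompson_trans_range hm).1; omega)
    refine ⟨fun s s' h => ?_, p2, p3⟩
    rcases Relation.ReflTransGen.cases_head h with rfl | ⟨c, e, h'⟩
    · exact ⟨0, by omega, .refl _⟩
    · have e' : (s, (none : Option α), c) ∈ N.trans := e
      rcases (memtrans _ _ _).1 e' with ⟨rfl,-,-⟩ | ⟨rfl,-,-⟩ | ⟨rfl,-,-⟩ | hm | hm
      · exact ⟨0, by omega, p3 s' h⟩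
      · exact pA _ _ (keyA _ _ h (by omega))
      · exact pB _ _ (keyB _ _ h (by omega))
      · exact pA _ _ (keyA _ _ h (by have := (thompson_trans_range hm).1; omega))
      · exact pB _ _ (keyB _ _ h (by have := (thompson_trans_range hm).1; omega))
  | alt S T ihS ihT =>
    have hS := S.size_pos; have hT := T.size_pos
    obtain ⟨h1A, h2A, h3A⟩ := ihS (b+2)
    obtain ⟨h1B, h2B, h3B⟩ := ihT (b+2+2*S.size)
    set N := thompson (Regex.alt S T) b with hN
    set A := thompson S (b+2) with hA
    set B := thompson T (b+2+2*S.size) with hB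
    have memtrans : ∀ (x : ℕ) (c : Option α) (y : ℕ), (x, c, y) ∈ N.trans ↔
        ((x = b ∧ c = none ∧ y = b+2) ∨ (x = b ∧ c = none ∧ y = b+2+2*S.size) ∨
         (x = b+2+1 ∧ c = none ∧ y = b+1) ∨ (x = b+2+2*S.size+1 ∧ c = none ∧ y = b+1) ∨
         (x,c,y) ∈ A.trans ∨ (x,c,y) ∈ B.trans) := by
      intro x c y
      simp [hN, hA, hB, thompson, thompson_start, thompson_accept]
    have memback : ∀ x y : ℕ, (x, y) ∈ N.back ↔
        ((x,y) ∈ A.back ∨ (x,y) ∈ B.back) := by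
      intro x y; simp [hN, hA, hB, thompson]
    have liftA : ∀ {x y k}, EPathB A x y k → EPathB N x y k := by
      intro x y k h
      refine h.lift ?_ ?_ ?_
      · intro p hp; rw [hN]; simp only [thompson, Finset.mem_union]; tauto
      · intro p hp; rw [hN]; simp only [thompson, Finset.mem_union]; tauto
      · intro x' y' ht hb
        rcases (memback _ _).1 hb with h' | h'
        · exact h'
        · exfalso
          have r1 := (thompson_trans_range ht).1
          have r2 := (thompson_back_range h').1
          omega
    have liftB : ∀ {x y k}, EPathB B x y k → EPathB N x y k := by
      intro x y k h
      refine h.lift ?_ ?_ ?_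
      · intro p hp; rw [hN]; simp only [thompson, Finset.mem_union]; tauto
      · intro p hp; rw [hN]; simp only [thompson, Finset.mem_union]; tauto
      · intro x' y' ht hb
        rcases (memback _ _).1 hb with h' | h'
        · exfalso
          have r1 := (thompson_trans_range ht).1
          have r2 := (thompson_back_range h').1
          omega
        · exact h'
    have e1 : (b, (none : Option α), b+2) ∈ N.trans := by rw [memtrans]; tauto
    have nb1 : (b, b+2) ∉ N.back := by
      rw [memback]; rintro (h | h) <;> have := (thompson_back_range h).1 <;> omega
    have e2 : (b, (none : Option α), b+2+2*S.size) ∈ N.trans := by rw [memtrans]; tauto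
    have nb2 : (b, b+2+2*S.size) ∉ N.back := by
      rw [memback]; rintro (h | h) <;> have := (thompson_back_range h).1 <;> omega
    have e3 : (b+2+1, (none : Option α), b+1) ∈ N.trans := by rw [memtrans]; tauto
    have nb3 : (b+2+1, b+1) ∉ N.back := by
      rw [memback]
      rintro (h | h)
      · have := (thompson_back_range h).2; omega
      · have := (thompson_back_range h).1; omega
    have e4 : (b+2+2*S.size+1, (none : Option α), b+1) ∈ N.trans := by rw [memtrans]; tauto
    have nb4 : (b+2+2*S.size+1, b+1) ∉ N.back := by
      rw [memback]
      rintro (h | h)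
      · have := (thompson_back_range h).1; omega
      · have := (thompson_back_range h).2; omega
    have keyA : ∀ s s', Relation.ReflTransGen N.epsStep s s' →
        (b+2 ≤ s ∧ s < b+2+2*S.size) →
        Relation.ReflTransGen A.epsStep s s' ∨
          (Relation.ReflTransGen A.epsStep s (b+2+1) ∧ s' = b+1) := by
      intro s s' h
      induction h using Relation.ReflTransGen.head_induction_on with
      | refl => intro _; exact Or.inl .refl
      | head e h' ih =>
        rename_i x y
        intro hs
        have e' : (x, (none : Option α), y) ∈ N.trans := e
        rcases (memtrans _ _ _).1 e' with ⟨rfl,-,rfl⟩ | ⟨rfl,-,rfl⟩ | ⟨rfl,-,rfl⟩ | ⟨rfl,-,rfl⟩ | hm | hm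
        · omega
        · omega
        · exact Or.inr ⟨.refl, thompson_rtg_accept_eq h'⟩
        · omega
        · have hy := (thompson_trans_range hm).2
          rcases ih (by omega) with h'' | ⟨h'', rfl⟩
          · exact Or.inl (Relation.ReflTransGen.head hm h'')
          · exact Or.inr ⟨Relation.ReflTransGen.head hm h'', rfl⟩
        · exfalso; have := (thompson_trans_range hm).1; omega
    have keyB : ∀ s s', Relation.ReflTransGen N.epsStep s s' →
        (b+2+2*S.size ≤ s) →
        Relation.ReflTransGen B.epsStep s s' ∨
          (Relation.ReflTransGen B.epsStep s (b+2+2*S.size+1) ∧ s' = b+1) := by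
      intro s s' h
      induction h using Relation.ReflTransGen.head_induction_on with
      | refl => intro _; exact Or.inl .refl
      | head e h' ih =>
        rename_i x y
        intro hs
        have e' : (x, (none : Option α), y) ∈ N.trans := e
        rcases (memtrans _ _ _).1 e' with ⟨rfl,-,rfl⟩ | ⟨rfl,-,rfl⟩ | ⟨rfl,-,rfl⟩ | ⟨rfl,-,rfl⟩ | hm | hm
        · omega
        · omega
        · omega
        · exact Or.inr ⟨.refl, thompson_rtg_accept_eq h'⟩
        · exfalso; have := (thompson_trans_range hm).1; omega
        · have hy := (thompson_trans_range hm).2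
          rcases ih (by omega) with h'' | ⟨h'', rfl⟩
          · exact Or.inl (Relation.ReflTransGen.head hm h'')
          · exact Or.inr ⟨Relation.ReflTransGen.head hm h'', rfl⟩
    have pA : ∀ s s', (Relation.ReflTransGen A.epsStep s s' ∨
          (Relation.ReflTransGen A.epsStep s (b+2+1) ∧ s' = b+1)) →
        ∃ k ≤ 1, EPathB N s s' k := by
      intro s s' h
      rcases h with h | ⟨h, rfl⟩
      · obtain ⟨k, hk, p⟩ := h1A s s' h
        exact ⟨k, hk, liftA p⟩
      · exact ⟨0, by omega, by simpa using (liftA (h2A s h)).append (.fwd e3 nb3 (.refl _))⟩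
    have pB : ∀ s s', (Relation.ReflTransGen B.epsStep s s' ∨
          (Relation.ReflTransGen B.epsStep s (b+2+2*S.size+1) ∧ s' = b+1)) →
        ∃ k ≤ 1, EPathB N s s' k := by
      intro s s' h
      rcases h with h | ⟨h, rfl⟩
      · obtain ⟨k, hk, p⟩ := h1B s s' h
        exact ⟨k, hk, liftB p⟩
      · exact ⟨0, by omega, by simpa using (liftB (h2B s h)).append (.fwd e4 nb4 (.refl _))⟩
    have p3 : ∀ s', Relation.ReflTransGen N.epsStep b s' → EPathB N b s' 0 := by
      intro s' h
      rcases Relation.ReflTransGen.cases_head h with rfl | ⟨c, e, h'⟩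
      · exact .refl _
      · have e' : (b, (none : Option α), c) ∈ N.trans := e
        rcases (memtrans _ _ _).1 e' with ⟨-,-,rfl⟩ | ⟨-,-,rfl⟩ | ⟨h0,-,-⟩ | ⟨h0,-,-⟩ | hm | hm
        · rcases keyA _ _ h' (by omega) with h'' | ⟨hacc, rfl⟩
          · exact .fwd e1 nb1 (liftA (h3A s' h''))
          · have f1 : EPathB N (b+2) (b+2+1) 0 := liftA (h3A _ hacc)
            exact .fwd e1 nb1 (by simpa using f1.append (.fwd e3 nb3 (.refl _)))
        · rcases keyB _ _ h' (by omega) with h'' | ⟨hacc, rfl⟩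
          · exact .fwd e2 nb2 (liftB (h3B s' h''))
          · have f1 : EPathB N (b+2+2*S.size) (b+2+2*S.size+1) 0 := liftB (h3B _ hacc)
            exact .fwd e2 nb2 (by simpa using f1.append (.fwd e4 nb4 (.refl _)))
        · omega
        · omega
        · exfalso; have := (thompson_trans_range hm).1; omega
        · exfalso; have := (thompson_trans_range hm).1; omega
    have p2 : ∀ s, Relation.ReflTransGen N.epsStep s (b+1) → EPathB N s (b+1) 0 := by
      intro s h
      rcases Relation.ReflTransGen.cases_head h with h0 | ⟨c, e, h'⟩
      · exact h0 ▸ .refl _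
      · have e' : (s, (none : Option α), c) ∈ N.trans := e
        have hsA : (b+2 ≤ s ∧ s < b+2+2*S.size) → EPathB N s (b+1) 0 := by
          intro hs
          rcases keyA _ _ h hs with h'' | ⟨hacc, -⟩
          · exfalso; rcases thompson_rtg_range' h'' with h'' | h'' <;> omega
          · exact by simpa using (liftA (h2A s hacc)).append (.fwd e3 nb3 (.refl _))
        have hsB : b+2+2*S.size ≤ s → EPathB N s (b+1) 0 := by
          intro hs
          rcases keyB _ _ h hs with h'' | ⟨hacc, -⟩
          · exfalso; rcases thompson_rtg_range' h'' with h'' | h'' <;> omega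
          · exact by simpa using (liftB (h2B s hacc)).append (.fwd e4 nb4 (.refl _))
        rcases (memtrans _ _ _).1 e' with ⟨rfl,-,-⟩ | ⟨rfl,-,-⟩ | ⟨rfl,-,-⟩ | ⟨rfl,-,-⟩ | hm | hm
        · exact p3 _ h
        · exact p3 _ h
        · exact hsA (by omega)
        · exact hsB (by omega)
        · exact hsA (by have := (thompson_trans_range hm).1; omega)
        · exact hsB (by have := (thompson_trans_range hm).1; omega)
    refine ⟨fun s s' h => ?_, p2, p3⟩
    rcases Relation.ReflTransGen.cases_head h with rfl | ⟨c, e, h'⟩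
    · exact ⟨0, by omega, .refl _⟩
    · have e' : (s, (none : Option α), c) ∈ N.trans := e
      rcases (memtrans _ _ _).1 e' with ⟨rfl,-,-⟩ | ⟨rfl,-,-⟩ | ⟨rfl,-,-⟩ | ⟨rfl,-,-⟩ | hm | hm
      · exact ⟨0, by omega, p3 s' h⟩
      · exact ⟨0, by omega, p3 s' h⟩
      · exact pA _ _ (keyA _ _ h (by omega))
      · exact pB _ _ (keyB _ _ h (by omega))
      · exact pA _ _ (keyA _ _ h (by have := (thompson_trans_range hm).1; omega))
      · exact pB _ _ (keyB _ _ h (by have := (thompson_trans_range hm).1; omega))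
  | star S ihS =>
    have hS := S.size_pos
    obtain ⟨h1A, h2A, h3A⟩ := ihS (b+2)
    set N := thompson (Regex.star S) b with hN
    set A := thompson S (b+2) with hA
    have memtrans : ∀ (x : ℕ) (c : Option α) (y : ℕ), (x, c, y) ∈ N.trans ↔
        ((x = b ∧ c = none ∧ y = b+2) ∨ (x = b ∧ c = none ∧ y = b+1) ∨
         (x = b+2+1 ∧ c = none ∧ y = b+1) ∨ (x = b+2+1 ∧ c = none ∧ y = b+2) ∨
         (x,c,y) ∈ A.trans) := by
      intro x c y
      simp [hN, hA, thompson, thompson_start, thompson_accept]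
    have memback : ∀ x y : ℕ, (x, y) ∈ N.back ↔
        ((x = b+2+1 ∧ y = b+2) ∨ (x,y) ∈ A.back) := by
      intro x y; simp [hN, hA, thompson, thompson_start, thompson_accept]
    have liftA : ∀ {x y k}, EPathB A x y k → EPathB N x y k := by
      intro x y k h
      refine h.lift ?_ ?_ ?_
      · intro p hp; rw [hN]; simp only [thompson, Finset.mem_union]; tauto
      · intro p hp; rw [hN]
        simp only [thompson, Finset.mem_insert]; tauto
      · intro x' y' ht hb
        rcases (memback _ _).1 hb with ⟨rfl, rfl⟩ | h'
        · exact (thompson_accept_no_src ht).elim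
        · exact h'
    have e0 : (b, (none : Option α), b+1) ∈ N.trans := by rw [memtrans]; tauto
    have nb0 : (b, b+1) ∉ N.back := by
      rw [memback]
      rintro (⟨h, -⟩ | h)
      · omega
      · have := (thompson_back_range h).1; omega
    have e1 : (b, (none : Option α), b+2) ∈ N.trans := by rw [memtrans]; tauto
    have nb1 : (b, b+2) ∉ N.back := by
      rw [memback]
      rintro (⟨h, -⟩ | h)
      · omega
      · have := (thompson_back_range h).1; omega
    have e3 : (b+2+1, (none : Option α), b+1) ∈ N.trans := by rw [memtrans]; tauto
    have nb3 : (b+2+1, b+1) ∉ N.back := by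
      rw [memback]
      rintro (⟨-, h⟩ | h)
      · omega
      · have := (thompson_back_range h).2; omega
    have ebkE : (b+2+1, (none : Option α), b+2) ∈ N.trans := by rw [memtrans]; tauto
    have ebkB : (b+2+1, b+2) ∈ N.back := by rw [memback]; tauto
    have keyA : ∀ s s', Relation.ReflTransGen N.epsStep s s' →
        (b+2 ≤ s ∧ s < b+2+2*S.size) →
        Relation.ReflTransGen A.epsStep s s' ∨
          (Relation.ReflTransGen A.epsStep s (b+2+1) ∧
            (s' = b+1 ∨ Relation.ReflTransGen A.epsStep (b+2) s')) := by
      intro s s' h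
      induction h using Relation.ReflTransGen.head_induction_on with
      | refl => intro _; exact Or.inl .refl
      | head e h' ih =>
        rename_i x y
        intro hs
        have e' : (x, (none : Option α), y) ∈ N.trans := e
        rcases (memtrans _ _ _).1 e' with ⟨rfl,-,rfl⟩ | ⟨rfl,-,rfl⟩ | ⟨rfl,-,rfl⟩ | ⟨rfl,-,rfl⟩ | hm
        · omega
        · omega
        · exact Or.inr ⟨.refl, Or.inl (thompson_rtg_accept_eq h')⟩
        · rcases ih (by omega) with h'' | ⟨-, hrest⟩
          · exact Or.inr ⟨.refl, Or.inr h''⟩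
          · exact Or.inr ⟨.refl, hrest⟩
        · have hy := (thompson_trans_range hm).2
          rcases ih (by omega) with h'' | ⟨h'', hrest⟩
          · exact Or.inl (Relation.ReflTransGen.head hm h'')
          · exact Or.inr ⟨Relation.ReflTransGen.head hm h'', hrest⟩
    have p3 : ∀ s', Relation.ReflTransGen N.epsStep b s' → EPathB N b s' 0 := by
      intro s' h
      rcases Relation.ReflTransGen.cases_head h with rfl | ⟨c, e, h'⟩
      · exact .refl _
      · have e' : (b, (none : Option α), c) ∈ N.trans := e
        rcases (memtrans _ _ _).1 e' with ⟨-,-,rfl⟩ | ⟨-,-,rfl⟩ | ⟨h0,-,-⟩ | ⟨h0,-,-⟩ | hm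
        · rcases keyA _ _ h' (by omega) with h'' | ⟨-, hrest⟩
          · exact .fwd e1 nb1 (liftA (h3A s' h''))
          · rcases hrest with rfl | h''
            · exact .fwd e0 nb0 (.refl _)
            · exact .fwd e1 nb1 (liftA (h3A s' h''))
        · have := thompson_rtg_accept_eq h'
          subst this
          exact .fwd e0 nb0 (.refl _)
        · omega
        · omega
        · exfalso; have := (thompson_trans_range hm).1; omega
    have p2 : ∀ s, Relation.ReflTransGen N.epsStep s (b+1) → EPathB N s (b+1) 0 := by
      intro s h
      rcases Relation.ReflTransGen.cases_head h with h0 | ⟨c, e, h'⟩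
      · exact h0 ▸ .refl _
      · have e' : (s, (none : Option α), c) ∈ N.trans := e
        have hsA : (b+2 ≤ s ∧ s < b+2+2*S.size) → EPathB N s (b+1) 0 := by
          intro hs
          rcases keyA _ _ h hs with h'' | ⟨hacc, hrest⟩
          · exfalso; rcases thompson_rtg_range' h'' with h'' | h'' <;> omega
          · exact by simpa using (liftA (h2A s hacc)).append (.fwd e3 nb3 (.refl _))
        rcases (memtrans _ _ _).1 e' with ⟨rfl,-,-⟩ | ⟨rfl,-,-⟩ | ⟨rfl,-,-⟩ | ⟨rfl,-,-⟩ | hm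
        · exact p3 _ h
        · exact p3 _ h
        · exact hsA (by omega)
        · exact hsA (by omega)
        · exact hsA (by have := (thompson_trans_range hm).1; omega)
    have pA : ∀ s s', (Relation.ReflTransGen A.epsStep s s' ∨
          (Relation.ReflTransGen A.epsStep s (b+2+1) ∧
            (s' = b+1 ∨ Relation.ReflTransGen A.epsStep (b+2) s'))) →
        ∃ k ≤ 1, EPathB N s s' k := by
      intro s s' h
      rcases h with h | ⟨hacc, hrest⟩
      · obtain ⟨k, hk, p⟩ := h1A s s' h
        exact ⟨k, hk, liftA p⟩
      · have f1 : EPathB N s (b+2+1) 0 := liftA (h2A s hacc)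
        rcases hrest with rfl | h''
        · exact ⟨0, by omega, by simpa using f1.append (.fwd e3 nb3 (.refl _))⟩
        · have f2 : EPathB N (b+2) s' 0 := liftA (h3A s' h'')
          exact ⟨1, by omega, by simpa using f1.append (.bk ebkE ebkB f2)⟩
    refine ⟨fun s s' h => ?_, p2, p3⟩
    rcases Relation.ReflTransGen.cases_head h with rfl | ⟨c, e, h'⟩
    · exact ⟨0, by omega, .refl _⟩
    · have e' : (s, (none : Option α), c) ∈ N.trans := e
      rcases (memtrans _ _ _).1 e' with ⟨rfl,-,-⟩ | ⟨rfl,-,-⟩ | ⟨rfl,-,-⟩ | ⟨rfl,-,-⟩ | hm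
      · exact ⟨0, by omega, p3 s' h⟩
      · exact ⟨0, by omega, p3 s' h⟩
      · exact pA _ _ (keyA _ _ h (by omega))
      · exact pA _ _ (keyA _ _ h (by omega))
      · exact pA _ _ (keyA _ _ h (by have := (thompson_trans_range hm).1; omega))
/-- in a Thompson NFA, any ε-reachability is witnessed by an ε-path
with at most one back transition; consequently `Close S` is the set of states
reachable from `S` by ε-paths using at most one back transition. -/
theorem thompson_eps_path_one_back (R : Regex α) (b : ℕ) :
    (∀ s s' : ℕ, Relation.ReflTransGen (thompson R b).epsStep s s' →
      ∃ k ≤ 1, EPathB (thompson R b) s s' k) ∧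
    (∀ S : Set ℕ, (thompson R b).Close S =
      {s' | ∃ s ∈ S, ∃ k ≤ 1, EPathB (thompson R b) s s' k}) := by
  obtain ⟨h1, -, -⟩ := thompson_epath_main R b
  refine ⟨h1, fun S => ?_⟩
  ext s'
  simp only [TNFA.Close, Set.mem_setOf_eq]
  constructor
  · rintro ⟨s, hs, h⟩
    exact ⟨s, hs, h1 s s' h⟩
  · rintro ⟨s, hs, k, -, p⟩
    exact ⟨s, hs, p.toRTG⟩
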